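/- Fix ε ∈ (0,1) and let B be a ball contained in Ω = [ε,1]². There exist constants c₁, c₂ > 0 depending only on ε (one may take c₁ = 1/(4π) and c₂ = 40/(επ)) such that for all (a,b) ∈ ℤ_{≥0}² with a + b > 0 and h_{a,b} sufficiently large, c₁ |B| ψ(h_{a,b})/h_{a,b} ≤ |σ_{a,b} ∩ B| ≤ c₂ |B| ψ(h_{a,b})/h_{a,b}. -/

import Mathlib

open MeasureTheory Filter Set

/-- The set `σ_{a,b}(c) = {(x,y) ∈ [0,1]² : |a²x + b²y − c²| < ψ(h_{a,b})}`,
where `h_{a,b} = max(a,b)`. -/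
def sigC (ψ : ℝ → ℝ) (a b c : ℕ) : Set (EuclideanSpace ℝ (Fin 2)) :=
  {p | p 0 ∈ Set.Icc (0 : ℝ) 1 ∧ p 1 ∈ Set.Icc (0 : ℝ) 1 ∧
    |(a : ℝ) ^ 2 * p 0 + (b : ℝ) ^ 2 * p 1 - (c : ℝ) ^ 2| < ψ ((max a b : ℕ) : ℝ)}

/-- The set `σ_{a,b} = ⋃_{c ∈ ℤ_{≥0}} σ_{a,b}(c)`. -/
def sigU (ψ : ℝ → ℝ) (a b : ℕ) : Set (EuclideanSpace ℝ (Fin 2)) :=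
  ⋃ c : ℕ, sigC ψ a b c

/-- The square `Ω = [ε,1]²`. -/
def unitSq (ε : ℝ) : Set (EuclideanSpace ℝ (Fin 2)) :=
  {p | p 0 ∈ Set.Icc ε 1 ∧ p 1 ∈ Set.Icc ε 1}

/-!
Put `u = a²x + b²y` with `a ≤ b`, so `h_{a,b} = b`. For fixed `x`, the slice of `σ_{a,b}` over an
interval of `y`-length `2w` is, after the affine change of variable, the `ψ`-neighbourhood of the
perfect squares inside an interval `(p, q)` of `u`-length `2b²w`. The squares in `(p, q)` are the
`c²` with `√p < c ≤ √q`, so there are `√q - √p ± 1` of them, and `√q - √p ≈ (q - p)/(2√q)` is of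
order `bw` because `ε b² ≤ p < q ≤ 2b²`. Once `ψ ≤ 1/2` their neighbourhoods are disjoint, so each
slice has measure of order `wψ/b`. Fubini over squares inscribed in and circumscribed about the
ball `B`, whose area is `πr²`, gives both bounds; the case `a > b` follows by swapping coordinates.
-/

def squareNbhd (δ : ℝ) : Set ℝ := ⋃ c : ℕ, Metric.ball ((c : ℝ) ^ 2) δ

lemma isOpen_squareNbhd (δ : ℝ) : IsOpen (squareNbhd δ) :=
  isOpen_iUnion fun _ => Metric.isOpen_ball

lemma mem_Ioc_floor_sqrt_iff {u v : ℝ} (hu : 0 ≤ u) {c : ℕ} :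
    c ∈ Finset.Ioc ⌊√u⌋₊ ⌊√v⌋₊ ↔ u < (c : ℝ) ^ 2 ∧ (c : ℝ) ^ 2 ≤ v := by
  rw [Finset.mem_Ioc, Nat.floor_lt (Real.sqrt_nonneg u), Real.sqrt_lt hu c.cast_nonneg]
  refine and_congr_right fun huc => ?_
  have hc : (0 : ℝ) < c := by nlinarith [c.cast_nonneg (α := ℝ)]
  rw [Nat.le_floor_iff (Real.sqrt_nonneg v), Real.le_sqrt' hc]

lemma card_Ioc_floor_le {s S : ℝ} (hs : 0 ≤ s) (hsS : s ≤ S) :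
    ((Finset.Ioc ⌊s⌋₊ ⌊S⌋₊).card : ℝ) ≤ S - s + 1 := by
  rw [Nat.card_Ioc, Nat.cast_sub (Nat.floor_le_floor hsS)]
  linarith [Nat.floor_le (hs.trans hsS), Nat.lt_floor_add_one s]

lemma sub_sub_one_le_card_Ioc_floor {s : ℝ} (hs : 0 ≤ s) (S : ℝ) :
    S - s - 1 ≤ ((Finset.Ioc ⌊s⌋₊ ⌊S⌋₊).card : ℝ) := by
  rw [Nat.card_Ioc]
  have hS := Nat.sub_one_lt_floor S
  have hs' := Nat.floor_le hs
  rcases le_total ⌊s⌋₊ ⌊S⌋₊ with h | h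
  · rw [Nat.cast_sub h]
    linarith
  · rw [Nat.sub_eq_zero_of_le h, Nat.cast_zero]
    linarith [(Nat.cast_le (α := ℝ)).2 h]

lemma pairwise_disjoint_ball_sq {δ : ℝ} (hδ : δ ≤ 1 / 2) :
    Pairwise fun m n : ℕ =>
      Disjoint (Metric.ball ((m : ℝ) ^ 2) δ) (Metric.ball ((n : ℝ) ^ 2) δ) := by
  intro m n hmn
  apply Metric.ball_disjoint_ball
  have h : 1 ≤ dist (m ^ 2) (n ^ 2) :=
    Nat.pairwise_one_le_dist ((Nat.pow_left_injective two_ne_zero).ne hmn)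
  rw [← Nat.dist_cast_real] at h
  push_cast at h
  linarith

lemma sum_volume_ball {ι : Type*} (C : Finset ι) (f : ι → ℝ) (δ : ℝ) :
    ∑ c ∈ C, volume (Metric.ball (f c) δ) = ENNReal.ofReal (C.card * (2 * δ)) := by
  simp only [Real.volume_ball, Finset.sum_const, nsmul_eq_mul]
  rw [ENNReal.ofReal_mul (Nat.cast_nonneg _), ENNReal.ofReal_natCast]

lemma volume_squareNbhd_inter_Ioo_le {δ p q : ℝ} (hδ : 0 ≤ δ) (hp : δ ≤ p) (hpq : p ≤ q) :
    volume (squareNbhd δ ∩ Ioo p q) ≤ ENNReal.ofReal (2 * δ * (√(q + δ) - √(p - δ) + 1)) := by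
  set C := Finset.Ioc ⌊√(p - δ)⌋₊ ⌊√(q + δ)⌋₊
  have hsub : squareNbhd δ ∩ Ioo p q ⊆ ⋃ c ∈ C, Metric.ball ((c : ℝ) ^ 2) δ := by
    rintro u ⟨hu, hpu, huq⟩
    obtain ⟨c, hc⟩ := mem_iUnion.1 hu
    have hc' : (c : ℝ) ^ 2 - δ < u ∧ u < (c : ℝ) ^ 2 + δ := by
      rwa [Real.ball_eq_Ioo, mem_Ioo] at hc
    exact mem_biUnion ((mem_Ioc_floor_sqrt_iff (by linarith)).2
      ⟨by linarith [hc'.2], by linarith [hc'.1]⟩) hc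
  have hcard := card_Ioc_floor_le (Real.sqrt_nonneg (p - δ))
    (Real.sqrt_le_sqrt (x := p - δ) (y := q + δ) (by linarith))
  calc volume (squareNbhd δ ∩ Ioo p q)
      ≤ ∑ c ∈ C, volume (Metric.ball ((c : ℝ) ^ 2) δ) :=
        (measure_mono hsub).trans (measure_biUnion_finset_le _ _)
    _ = ENNReal.ofReal (C.card * (2 * δ)) := sum_volume_ball _ _ _
    _ ≤ _ := ENNReal.ofReal_le_ofReal (by nlinarith)

lemma le_volume_squareNbhd_inter_Ioo {δ p q : ℝ} (hδ : 0 ≤ δ) (hδ' : δ ≤ 1 / 2) (hp : 0 ≤ p) :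
    ENNReal.ofReal (2 * δ * (√(q - δ) - √(p + δ) - 1)) ≤ volume (squareNbhd δ ∩ Ioo p q) := by
  set C := Finset.Ioc ⌊√(p + δ)⌋₊ ⌊√(q - δ)⌋₊
  have hsub : ⋃ c ∈ C, Metric.ball ((c : ℝ) ^ 2) δ ⊆ squareNbhd δ ∩ Ioo p q := by
    refine iUnion₂_subset fun c hc =>
      subset_inter (subset_iUnion (fun c : ℕ => Metric.ball ((c : ℝ) ^ 2) δ) c) ?_
    obtain ⟨hpc, hcq⟩ := (mem_Ioc_floor_sqrt_iff (by linarith)).1 hc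
    rw [Real.ball_eq_Ioo]
    exact Ioo_subset_Ioo (by linarith) (by linarith)
  have hcard := sub_sub_one_le_card_Ioc_floor (Real.sqrt_nonneg (p + δ)) √(q - δ)
  calc ENNReal.ofReal (2 * δ * (√(q - δ) - √(p + δ) - 1))
      ≤ ENNReal.ofReal (C.card * (2 * δ)) := ENNReal.ofReal_le_ofReal (by nlinarith)
    _ = ∑ c ∈ C, volume (Metric.ball ((c : ℝ) ^ 2) δ) := (sum_volume_ball _ _ _).symm
    _ = volume (⋃ c ∈ C, Metric.ball ((c : ℝ) ^ 2) δ) :=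
        (measure_biUnion_finset ((pairwise_disjoint_ball_sq hδ').set_pairwise _)
          fun _ _ => measurableSet_ball).symm
    _ ≤ _ := measure_mono hsub

lemma sqrt_sub_sqrt_le_div_sqrt {u v : ℝ} (hu : 0 ≤ u) (huv : u ≤ v) (hv : 0 < v) :
    √v - √u ≤ (v - u) / √v := by
  rw [le_div_iff₀ (Real.sqrt_pos.2 hv)]
  nlinarith [Real.sq_sqrt hu, Real.sq_sqrt hv.le, Real.sqrt_le_sqrt huv, Real.sqrt_nonneg u]

lemma sub_div_two_mul_sqrt_le_sqrt_sub_sqrt {u v : ℝ} (hu : 0 ≤ u) (hv : 0 < v) :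
    (v - u) / (2 * √v) ≤ √v - √u := by
  rw [div_le_iff₀ (by positivity)]
  nlinarith [Real.sq_sqrt hu, Real.sq_sqrt hv.le, sq_nonneg (√v - √u)]

lemma volume_preimage_add_mul_inter_Ioo {β : ℝ} (hβ : 0 < β) (t : ℝ) (s : Set ℝ) (l u : ℝ) :
    volume ((fun y => t + β * y) ⁻¹' s ∩ Ioo l u) =
      ENNReal.ofReal β⁻¹ * volume (s ∩ Ioo (t + β * l) (t + β * u)) := by
  have hIoo : (fun y => t + β * y) ⁻¹' Ioo (t + β * l) (t + β * u) = Ioo l u := by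
    ext y
    simp only [mem_preimage, mem_Ioo, add_lt_add_iff_left, mul_lt_mul_iff_right₀ hβ]
  rw [← hIoo, ← preimage_inter, show (fun y => t + β * y) = (fun x => t + x) ∘ (β * ·) from rfl,
    preimage_comp, Real.volume_preimage_mul_left hβ.ne', measure_preimage_add,
    abs_of_pos (inv_pos.2 hβ)]

lemma volume_preimage_squareNbhd_inter_Ioo_le {t b δ ε y₀ w : ℝ} (ht : 0 ≤ t) (hb : 0 < b)
    (hy : ε ≤ y₀ - w ∧ y₀ + w ≤ 1) (hδ : 0 ≤ δ) (hδ' : δ ≤ 1 / 2)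
    (hbw : 8 ≤ b * w) (hbε : 1 ≤ b * ε) :
    volume ((fun y => t + b ^ 2 * y) ⁻¹' squareNbhd δ ∩ Ioo (y₀ - w) (y₀ + w)) ≤
      ENNReal.ofReal (6 * w * δ / (ε * b)) := by
  rw [volume_preimage_add_mul_inter_Ioo (by positivity)]
  set p := t + b ^ 2 * (y₀ - w) with hp_def
  set q := t + b ^ 2 * (y₀ + w) with hq_def
  have hw : 0 < w := pos_of_mul_pos_right (by linarith) hb.le
  have hε : 0 < ε := pos_of_mul_pos_right (by linarith) hb.le
  have hb1 : 1 ≤ b := by nlinarith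
  have hp : b ^ 2 * ε ≤ p := by nlinarith [mul_le_mul_of_nonneg_left hy.1 (sq_nonneg b)]
  have hδp : δ ≤ p := by nlinarith
  have hqp : (q + δ) - (p - δ) = 2 * b ^ 2 * w + 2 * δ := by rw [hp_def, hq_def]; ring
  have hpq : p ≤ q := by rw [hp_def, hq_def]; nlinarith
  have hp0 : 0 < p := lt_of_lt_of_le (by positivity) hp
  have hq : b * ε ≤ √(q + δ) := by
    rw [Real.le_sqrt' (by positivity)]
    nlinarith [mul_le_mul_of_nonneg_left (show ε ≤ 1 by linarith) (by positivity : 0 ≤ b ^ 2 * ε)]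
  have hcount : √(q + δ) - √(p - δ) + 1 ≤ 3 * b * w / ε :=
    calc √(q + δ) - √(p - δ) + 1 ≤ ((q + δ) - (p - δ)) / √(q + δ) + 1 := by
          gcongr
          exact sqrt_sub_sqrt_le_div_sqrt (by linarith) (by linarith) (by linarith)
      _ ≤ (2 * b ^ 2 * w + 2 * δ) / (b * ε) + 1 := by
          rw [hqp]
          gcongr
      _ ≤ 3 * b * w / ε := by
          rw [div_add_one (by positivity), div_le_div_iff₀ (by positivity) hε]
          nlinarith
  calc ENNReal.ofReal (b ^ 2)⁻¹ * volume (squareNbhd δ ∩ Ioo p q)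
      ≤ ENNReal.ofReal (b ^ 2)⁻¹ * ENNReal.ofReal (2 * δ * (√(q + δ) - √(p - δ) + 1)) := by
        gcongr
        exact volume_squareNbhd_inter_Ioo_le hδ hδp hpq
    _ ≤ ENNReal.ofReal (6 * w * δ / (ε * b)) := by
        rw [← ENNReal.ofReal_mul (by positivity)]
        refine ENNReal.ofReal_le_ofReal ?_
        calc (b ^ 2)⁻¹ * (2 * δ * (√(q + δ) - √(p - δ) + 1))
            ≤ (b ^ 2)⁻¹ * (2 * δ * (3 * b * w / ε)) := by gcongr
          _ = 6 * w * δ / (ε * b) := by field_simp; ring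

lemma le_volume_preimage_squareNbhd_inter_Ioo {t b δ y₀ w : ℝ} (ht : 0 ≤ t) (htb : t ≤ b ^ 2)
    (hb : 0 < b) (hy : 0 ≤ y₀ - w ∧ y₀ + w ≤ 1) (hδ : 0 ≤ δ) (hδ' : δ ≤ 1 / 2)
    (hbw : 8 ≤ b * w) :
    ENNReal.ofReal (w * δ / b) ≤
      volume ((fun y => t + b ^ 2 * y) ⁻¹' squareNbhd δ ∩ Ioo (y₀ - w) (y₀ + w)) := by
  rw [volume_preimage_add_mul_inter_Ioo (by positivity)]
  set p := t + b ^ 2 * (y₀ - w) with hp_def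
  set q := t + b ^ 2 * (y₀ + w) with hq_def
  have hw : 0 < w := pos_of_mul_pos_right (by linarith) hb.le
  have hb1 : 1 ≤ b := by nlinarith
  have hp : 0 ≤ p := by nlinarith [mul_nonneg (sq_nonneg b) hy.1]
  have hqp : (q - δ) - (p + δ) = 2 * b ^ 2 * w - 2 * δ := by rw [hp_def, hq_def]; ring
  have hq : 0 < q - δ := by nlinarith
  have hq' : √(q - δ) ≤ 3 / 2 * b := by
    rw [Real.sqrt_le_left (by positivity)]
    nlinarith [mul_le_mul_of_nonneg_left hy.2 (sq_nonneg b)]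
  have hcount : b * w / 2 ≤ √(q - δ) - √(p + δ) - 1 :=
    calc b * w / 2 ≤ (2 * b ^ 2 * w - 2 * δ) / (3 * b) - 1 := by
          rw [le_sub_iff_add_le, le_div_iff₀ (by positivity)]
          nlinarith
      _ ≤ ((q - δ) - (p + δ)) / (2 * √(q - δ)) - 1 := by
          rw [hqp]
          gcongr ?_ - 1
          exact div_le_div_of_nonneg_left (by nlinarith) (by positivity) (by linarith)
      _ ≤ √(q - δ) - √(p + δ) - 1 := by
          gcongr
          exact sub_div_two_mul_sqrt_le_sqrt_sub_sqrt (by linarith) hq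
  calc ENNReal.ofReal (w * δ / b)
      = ENNReal.ofReal (b ^ 2)⁻¹ * ENNReal.ofReal (2 * δ * (b * w / 2)) := by
        rw [← ENNReal.ofReal_mul (by positivity)]
        congr 1
        field_simp
    _ ≤ ENNReal.ofReal (b ^ 2)⁻¹ * ENNReal.ofReal (2 * δ * (√(q - δ) - √(p + δ) - 1)) := by
        gcongr
    _ ≤ ENNReal.ofReal (b ^ 2)⁻¹ * volume (squareNbhd δ ∩ Ioo p q) := by
        gcongr
        exact le_volume_squareNbhd_inter_Ioo hδ hδ' hp

lemma MeasureTheory.Measure.prod_inter_prod_eq_setLIntegral {α β : Type*} [MeasurableSpace α]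
    [MeasurableSpace β] {μ : Measure α} {ν : Measure β} [SFinite μ] [SFinite ν]
    {s : Set (α × β)} (hs : MeasurableSet s) (I : Set α) (J : Set β) :
    μ.prod ν (s ∩ I ×ˢ J) = ∫⁻ x in I, ν (Prod.mk x ⁻¹' s ∩ J) ∂μ := by
  rw [← Measure.restrict_apply hs, ← Measure.prod_restrict, Measure.prod_apply hs]
  refine lintegral_congr fun x => ?_
  rw [Measure.restrict_apply (measurable_prodMk_left hs)]

/-- `σ_{a,b}` in the coordinates of `ℝ × ℝ`, with `ψ(h_{a,b})` replaced by `δ` and without the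
restriction to `[0,1]²`. -/
def quadStrips (a b δ : ℝ) : Set (ℝ × ℝ) := {z | a ^ 2 * z.1 + b ^ 2 * z.2 ∈ squareNbhd δ}

lemma measurableSet_quadStrips (a b δ : ℝ) : MeasurableSet (quadStrips a b δ) :=
  ((isOpen_squareNbhd δ).preimage (by fun_prop)).measurableSet

lemma volume_quadStrips_inter_prod_comm (a b δ : ℝ) (I J : Set ℝ) :
    volume (quadStrips a b δ ∩ I ×ˢ J) = volume (quadStrips b a δ ∩ J ×ˢ I) := by
  have hswap : Prod.swap ⁻¹' (quadStrips b a δ ∩ J ×ˢ I) = quadStrips a b δ ∩ I ×ˢ J := by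
    ext ⟨x, y⟩
    simp only [quadStrips, mem_preimage, mem_inter_iff, mem_ofPred_eq, Prod.swap_prod_mk,
      mem_prod, add_comm (b ^ 2 * y), and_comm (a := y ∈ J)]
  rw [← hswap]
  exact MeasurePreserving.measure_preimage_equiv (f := MeasurableEquiv.prodComm)
    Measure.measurePreserving_swap _

lemma volume_quadStrips_inter_prod_le {a b δ ε x₀ y₀ w : ℝ} (hb : 0 < b) (hx : 0 ≤ x₀ - w)
    (hy : ε ≤ y₀ - w ∧ y₀ + w ≤ 1) (hδ : 0 ≤ δ) (hδ' : δ ≤ 1 / 2) (hbw : 8 ≤ b * w)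
    (hbε : 1 ≤ b * ε) :
    volume (quadStrips a b δ ∩ Ioo (x₀ - w) (x₀ + w) ×ˢ Ioo (y₀ - w) (y₀ + w)) ≤
      ENNReal.ofReal (12 * w ^ 2 * δ / (ε * b)) := by
  have hw : 0 < w := pos_of_mul_pos_right (by linarith) hb.le
  have hε : 0 < ε := pos_of_mul_pos_right (by linarith) hb.le
  rw [Measure.volume_eq_prod, Measure.prod_inter_prod_eq_setLIntegral
    (measurableSet_quadStrips a b δ)]
  calc ∫⁻ x in Ioo (x₀ - w) (x₀ + w),
        volume (Prod.mk x ⁻¹' quadStrips a b δ ∩ Ioo (y₀ - w) (y₀ + w))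
      ≤ ∫⁻ _ in Ioo (x₀ - w) (x₀ + w), ENNReal.ofReal (6 * w * δ / (ε * b)) :=
        setLIntegral_mono' measurableSet_Ioo fun x hx' =>
          volume_preimage_squareNbhd_inter_Ioo_le (t := a ^ 2 * x)
            (mul_nonneg (sq_nonneg a) (by linarith [hx'.1])) hb hy hδ hδ' hbw hbε
    _ = ENNReal.ofReal (12 * w ^ 2 * δ / (ε * b)) := by
        rw [setLIntegral_const, Real.volume_Ioo, ← ENNReal.ofReal_mul (by positivity)]
        congr 1
        ring

lemma le_volume_quadStrips_inter_prod {a b δ x₀ y₀ w : ℝ} (ha : 0 ≤ a) (hab : a ≤ b)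
    (hx : 0 ≤ x₀ - w ∧ x₀ + w ≤ 1) (hy : 0 ≤ y₀ - w ∧ y₀ + w ≤ 1) (hδ : 0 ≤ δ)
    (hδ' : δ ≤ 1 / 2) (hbw : 8 ≤ b * w) :
    ENNReal.ofReal (2 * w ^ 2 * δ / b) ≤
      volume (quadStrips a b δ ∩ Ioo (x₀ - w) (x₀ + w) ×ˢ Ioo (y₀ - w) (y₀ + w)) := by
  have hb : 0 < b := by nlinarith
  have hw : 0 < w := pos_of_mul_pos_right (by linarith) hb.le
  rw [Measure.volume_eq_prod, Measure.prod_inter_prod_eq_setLIntegral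
    (measurableSet_quadStrips a b δ)]
  calc ENNReal.ofReal (2 * w ^ 2 * δ / b)
      = ∫⁻ _ in Ioo (x₀ - w) (x₀ + w), ENNReal.ofReal (w * δ / b) := by
        rw [setLIntegral_const, Real.volume_Ioo, ← ENNReal.ofReal_mul (by positivity)]
        congr 1
        ring
    _ ≤ ∫⁻ x in Ioo (x₀ - w) (x₀ + w),
          volume (Prod.mk x ⁻¹' quadStrips a b δ ∩ Ioo (y₀ - w) (y₀ + w)) :=
        setLIntegral_mono' measurableSet_Ioo fun x hx' =>
          le_volume_preimage_squareNbhd_inter_Ioo (t := a ^ 2 * x)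
            (mul_nonneg (sq_nonneg a) (by linarith [hx'.1]))
            (by nlinarith [hx'.1, hx'.2]) hb hy hδ hδ' hbw

lemma volume_quadStrips_inter_prod_bounds {a b δ ε x₀ y₀ w : ℝ} (ha : 0 ≤ a) (hb : 0 ≤ b)
    (hx : ε ≤ x₀ - w ∧ x₀ + w ≤ 1) (hy : ε ≤ y₀ - w ∧ y₀ + w ≤ 1) (hδ : 0 ≤ δ)
    (hδ' : δ ≤ 1 / 2) (hw : 8 ≤ max a b * w) (hε : 1 ≤ max a b * ε) :
    ENNReal.ofReal (2 * w ^ 2 * δ / max a b) ≤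
        volume (quadStrips a b δ ∩ Ioo (x₀ - w) (x₀ + w) ×ˢ Ioo (y₀ - w) (y₀ + w)) ∧
      volume (quadStrips a b δ ∩ Ioo (x₀ - w) (x₀ + w) ×ˢ Ioo (y₀ - w) (y₀ + w)) ≤
        ENNReal.ofReal (12 * w ^ 2 * δ / (ε * max a b)) := by
  wlog hab : a ≤ b generalizing a b x₀ y₀
  · rw [volume_quadStrips_inter_prod_comm, max_comm]
    rw [max_comm] at hw hε
    exact this hb ha hy hx hw hε (le_of_not_ge hab)
  rw [max_eq_right hab] at hw hε ⊢
  have hε0 : 0 < ε := pos_of_mul_pos_right (by linarith) hb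
  exact ⟨le_volume_quadStrips_inter_prod ha hab ⟨by linarith, hx.2⟩ ⟨by linarith, hy.2⟩ hδ hδ' hw,
    volume_quadStrips_inter_prod_le (by nlinarith) (by linarith) hy hδ hδ' hw hε⟩

def toProd : EuclideanSpace ℝ (Fin 2) ≃ᵐ ℝ × ℝ :=
  (MeasurableEquiv.toLp 2 (Fin 2 → ℝ)).symm.trans MeasurableEquiv.finTwoArrow

@[simp]
lemma toProd_apply (p : EuclideanSpace ℝ (Fin 2)) : toProd p = (p 0, p 1) := rfl

lemma measurePreserving_toProd : MeasurePreserving toProd :=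
  (volume_preserving_finTwoArrow ℝ).comp
    (EuclideanSpace.volume_preserving_symm_measurableEquiv_toLp (Fin 2))

lemma toProd_preimage_square_subset_ball (x₀ : EuclideanSpace ℝ (Fin 2)) {w r : ℝ} (hr : 0 < r)
    (hwr : 2 * w ^ 2 ≤ r ^ 2) :
    toProd ⁻¹' (Ioo (x₀ 0 - w) (x₀ 0 + w) ×ˢ Ioo (x₀ 1 - w) (x₀ 1 + w)) ⊆ Metric.ball x₀ r := by
  intro p hp
  simp only [mem_preimage, toProd_apply, mem_prod, mem_Ioo] at hp
  rw [Metric.mem_ball, EuclideanSpace.dist_eq, Fin.sum_univ_two, Real.sqrt_lt' hr,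
    Real.dist_eq, Real.dist_eq, sq_abs, sq_abs]
  nlinarith

lemma ball_subset_toProd_preimage_square (x₀ : EuclideanSpace ℝ (Fin 2)) (r : ℝ) :
    Metric.ball x₀ r ⊆ toProd ⁻¹' (Ioo (x₀ 0 - r) (x₀ 0 + r) ×ˢ Ioo (x₀ 1 - r) (x₀ 1 + r)) := by
  intro p hp
  have h : ∀ i, |p i - x₀ i| < r := fun i =>
    (PiLp.dist_apply_le p x₀ i).trans_lt (Metric.mem_ball.1 hp)
  simp only [mem_preimage, toProd_apply, mem_prod, mem_Ioo]
  constructor <;> constructor <;> linarith [abs_sub_lt_iff.1 (h 0), abs_sub_lt_iff.1 (h 1)]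

lemma unitSq_anti : Antitone unitSq := fun _ _ h _ hp =>
  ⟨⟨h.trans hp.1.1, hp.1.2⟩, h.trans hp.2.1, hp.2.2⟩

lemma isClosed_unitSq (ε : ℝ) : IsClosed (unitSq ε) :=
  (isClosed_Icc.preimage (by fun_prop)).inter (isClosed_Icc.preimage (by fun_prop))

lemma le_sub_and_add_le_of_ball_subset_unitSq {x₀ : EuclideanSpace ℝ (Fin 2)} {r ε : ℝ}
    (hr : 0 < r) (h : Metric.ball x₀ r ⊆ unitSq ε) :
    (ε ≤ x₀ 0 - r ∧ x₀ 0 + r ≤ 1) ∧ (ε ≤ x₀ 1 - r ∧ x₀ 1 + r ≤ 1) := by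
  have hcl : Metric.closedBall x₀ r ⊆ unitSq ε :=
    closure_ball x₀ hr.ne' ▸ closure_minimal h (isClosed_unitSq ε)
  have hmem : ∀ i t, |t| ≤ r → x₀ + EuclideanSpace.single i t ∈ unitSq ε := fun i t ht =>
    hcl (by rwa [Metric.mem_closedBall, dist_self_add_left, PiLp.norm_single, Real.norm_eq_abs])
  have h0 := (hmem 0 r (abs_of_pos hr).le).1
  have h0' := (hmem 0 (-r) (by rw [abs_neg, abs_of_pos hr])).1
  have h1 := (hmem 1 r (abs_of_pos hr).le).2
  have h1' := (hmem 1 (-r) (by rw [abs_neg, abs_of_pos hr])).2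
  simp only [PiLp.add_apply, PiLp.single_eq_same, mem_Icc] at h0 h0' h1 h1'
  constructor <;> constructor <;> linarith

lemma sigU_inter_eq {ψ : ℝ → ℝ} {a b : ℕ} {s : Set (EuclideanSpace ℝ (Fin 2))}
    (hs : s ⊆ unitSq 0) :
    sigU ψ a b ∩ s = toProd ⁻¹' quadStrips a b (ψ (max a b : ℕ)) ∩ s := by
  ext p
  simp only [sigU, sigC, quadStrips, squareNbhd, mem_inter_iff, mem_iUnion, mem_preimage,
    toProd_apply, mem_ofPred_eq, Metric.mem_ball, Real.dist_eq]
  constructor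
  · rintro ⟨⟨c, -, -, hc⟩, hp⟩
    exact ⟨⟨c, hc⟩, hp⟩
  · rintro ⟨⟨c, hc⟩, hp⟩
    exact ⟨⟨c, (hs hp).1, (hs hp).2, hc⟩, hp⟩

lemma volume_toProd_preimage_quadStrips_inter_ball_bounds {a b δ ε r : ℝ}
    {x₀ : EuclideanSpace ℝ (Fin 2)} (ha : 0 ≤ a) (hb : 0 ≤ b) (hr : 0 < r)
    (hB : Metric.ball x₀ r ⊆ unitSq ε) (hδ : 0 ≤ δ) (hδ' : δ ≤ 1 / 2)
    (hhr : 12 ≤ max a b * r) (hhε : 1 ≤ max a b * ε) :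
    ENNReal.ofReal (49 / 50 * r ^ 2 * δ / max a b) ≤
        volume (toProd ⁻¹' quadStrips a b δ ∩ Metric.ball x₀ r) ∧
      volume (toProd ⁻¹' quadStrips a b δ ∩ Metric.ball x₀ r) ≤
        ENNReal.ofReal (12 * r ^ 2 * δ / (ε * max a b)) := by
  obtain ⟨hx, hy⟩ := le_sub_and_add_le_of_ball_subset_unitSq hr hB
  have hinner := (volume_quadStrips_inter_prod_bounds (x₀ := x₀ 0) (y₀ := x₀ 1)
    (w := 7 / 10 * r) ha hb ⟨by linarith [hx.1], by linarith [hx.2]⟩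
    ⟨by linarith [hy.1], by linarith [hy.2]⟩ hδ hδ' (by nlinarith) hhε).1
  have houter := (volume_quadStrips_inter_prod_bounds ha hb hx hy hδ hδ' (by nlinarith) hhε).2
  constructor
  · calc ENNReal.ofReal (49 / 50 * r ^ 2 * δ / max a b)
        = ENNReal.ofReal (2 * (7 / 10 * r) ^ 2 * δ / max a b) := by ring_nf
      _ ≤ _ := hinner
      _ = volume (toProd ⁻¹' (quadStrips a b δ ∩ _)) :=
          (measurePreserving_toProd.measure_preimage_equiv _).symm
      _ ≤ _ := measure_mono (inter_subset_inter_right _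
          (toProd_preimage_square_subset_ball x₀ hr (by nlinarith)))
  · calc volume (toProd ⁻¹' quadStrips a b δ ∩ Metric.ball x₀ r)
        ≤ volume (toProd ⁻¹' (quadStrips a b δ ∩
            Ioo (x₀ 0 - r) (x₀ 0 + r) ×ˢ Ioo (x₀ 1 - r) (x₀ 1 + r))) :=
          measure_mono (inter_subset_inter_right _ (ball_subset_toProd_preimage_square x₀ r))
      _ = _ := measurePreserving_toProd.measure_preimage_equiv _
      _ ≤ _ := houter

theorem volume_sigU_inter_ball
    (ε : ℝ) (hε : ε ∈ Set.Ioo (0 : ℝ) 1) :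
    ∃ c₁ c₂ : ℝ, 0 < c₁ ∧ 0 < c₂ ∧
      ∀ ψ : ℝ → ℝ,
        (∀ x : ℝ, 0 < x → 0 < ψ x) →
        AntitoneOn ψ (Set.Ioi 0) →
        Tendsto ψ atTop (nhds 0) →
        ∀ (x₀ : EuclideanSpace ℝ (Fin 2)) (r : ℝ), 0 < r →
          Metric.ball x₀ r ⊆ unitSq ε →
          ∃ H₀ : ℕ, ∀ a b : ℕ, 0 < a + b → H₀ ≤ max a b →
            ENNReal.ofReal (c₁ * ψ ((max a b : ℕ) : ℝ) / ((max a b : ℕ) : ℝ)) *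
                volume (Metric.ball x₀ r) ≤
              volume (sigU ψ a b ∩ Metric.ball x₀ r) ∧
            volume (sigU ψ a b ∩ Metric.ball x₀ r) ≤
              ENNReal.ofReal (c₂ * ψ ((max a b : ℕ) : ℝ) / ((max a b : ℕ) : ℝ)) *
                volume (Metric.ball x₀ r) := by
  obtain ⟨hε0, -⟩ := hε
  refine ⟨1 / (4 * Real.pi), 40 / (ε * Real.pi), by positivity, by positivity, ?_⟩
  intro ψ hψpos _ hψ x₀ r hr hB
  obtain ⟨H₀, hH₀⟩ := eventually_atTop.1 <|
    ((hψ.comp tendsto_natCast_atTop_atTop).eventually (eventually_le_nhds one_half_pos)).and <|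
      ((tendsto_natCast_atTop_atTop.atTop_mul_const hr).eventually_ge_atTop 12).and
        ((tendsto_natCast_atTop_atTop.atTop_mul_const hε0).eventually_ge_atTop 1)
  refine ⟨H₀, fun a b _ hab => ?_⟩
  obtain ⟨hψh, hhr, hhε⟩ := hH₀ _ hab
  rw [sigU_inter_eq (hB.trans (unitSq_anti hε0.le)), EuclideanSpace.volume_ball_fin_two,
    ← ENNReal.ofReal_pow hr.le, ← ENNReal.ofReal_mul (by positivity)]
  simp only [Function.comp_apply, Nat.cast_max] at hψh hhr hhε ⊢
  have hh : 0 < max (a : ℝ) b := pos_of_mul_pos_left (by linarith) hr.le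
  have hδ := hψpos _ hh
  obtain ⟨hlower, hupper⟩ := volume_toProd_preimage_quadStrips_inter_ball_bounds
    (Nat.cast_nonneg a) (Nat.cast_nonneg b) hr hB hδ.le hψh hhr hhε
  constructor
  · refine le_trans ?_ hlower
    rw [← ENNReal.ofReal_mul (by positivity)]
    refine ENNReal.ofReal_le_ofReal ?_
    field_simp
    nlinarith [mul_pos (sq_pos_of_pos hr) hδ, Real.pi_pos]
  · refine hupper.trans ?_
    rw [← ENNReal.ofReal_mul (by positivity)]
    refine ENNReal.ofReal_le_ofReal ?_
    field_simp
    nlinarith [mul_pos (sq_pos_of_pos hr) hδ, Real.pi_pos]
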